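/- arXiv:2411.07972 — 2 statements merged into one kernel-verified Lean document; each statement's English description precedes it below -/
import Mathlib

section
/- Let F be a field and B : {0,1}^{r+3s+3} → {0,1} a boolean function, and let B̂ : F^{r+3s+3} → F extend 1-B on boolean inputs (i.e., B̂(c) = 1 - B(c) for c ∈ {0,1}^{r+3s+3}, embedding {0,1} into F). For a function Â : F^s → F (where we abuse notation and evaluate on boolean strings), define g(z,b₁,b₂,b₃,a₁,a₂,a₃) := B̂(z,b⃗,a⃗)·∏_{i=1}^3 (Â(bᵢ)+aᵢ-1). Then: there exists an assignment A : {0,1}^s → {0,1} with B(z,b₁,b₂,b₃,A(b₁),A(b₂),A(b₃)) = 1 for all z ∈ {0,1}^r, b₁,b₂,b₃ ∈ {0,1}^s, if and only if there exists Â : F^s → F such that g(z,b₁,b₂,b₃,a₁,a₂,a₃) = 0 for all z ∈ {0,1}^r, b₁,b₂,b₃ ∈ {0,1}^s, a₁,a₂,a₃ ∈ {0,1}. -/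
open Finset

/-- the key equivalence for the arithmetisation of Oracle-3SAT:
`B` is implicitly satisfiable iff there is a polynomial-style extension `Â`
making `g` vanish on all boolean points. -/
theorem stmt6 (F : Type*) [Field F] (r s : ℕ)
    (B : (Fin r → Bool) → (Fin 3 → (Fin s → Bool)) → (Fin 3 → Bool) → Bool)
    (Bhat : (Fin r → F) → (Fin 3 → (Fin s → F)) → (Fin 3 → F) → F)
    (hBhat : ∀ z b a,
      Bhat (fun i => if z i then 1 else 0)
          (fun j i => if b j i then 1 else 0)
          (fun j => if a j then 1 else 0) =
        1 - (if B z b a then (1 : F) else 0)) :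
    (∃ A : (Fin s → Bool) → Bool,
        ∀ z b, B z b (fun j => A (b j)) = true) ↔
      (∃ Ahat : (Fin s → F) → F,
        ∀ (z : Fin r → Bool) (b : Fin 3 → (Fin s → Bool)) (a : Fin 3 → Bool),
          Bhat (fun i => if z i then 1 else 0)
              (fun j i => if b j i then 1 else 0)
              (fun j => if a j then 1 else 0) *
            ∏ j : Fin 3,
              (Ahat (fun i => if b j i then 1 else 0) +
                (if a j then (1 : F) else 0) - 1) = 0) := by
  classical
  constructor
  · rintro ⟨A, hA⟩
    refine ⟨fun x => if A (fun i => x i = 1) then 1 else 0, ?_⟩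
    intro z b a
    have key : ∀ j : Fin 3, (fun i => (if b j i then (1:F) else 0) = 1) = (fun i => b j i = true) := by
      intro j
      funext i
      cases h : b j i <;> simp [zero_ne_one (α := F)]
    by_cases hall : ∀ j : Fin 3, a j = A (b j)
    · have : (fun j => A (b j)) = a := by funext j; exact (hall j).symm
      rw [hBhat]
      have hB : B z b a = true := by rw [← this]; exact hA z b
      rw [hB]
      simp
    · push_neg at hall
      obtain ⟨j, hj⟩ := hall
      apply mul_eq_zero_of_right
      apply Finset.prod_eq_zero (Finset.mem_univ j)
      simp only
      have harg : (A fun i => decide ((if b j i = true then (1:F) else 0) = 1)) = A (b j) := by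
        congr 1
        funext i
        by_cases h : b j i <;> simp [h, zero_ne_one (α := F)]
      rw [harg]
      cases hAb : A (b j) <;> cases ha : a j <;> simp_all
  · rintro ⟨Ahat, hA⟩
    set A : (Fin s → Bool) → Bool := fun c => decide (Ahat (fun i => if c i then 1 else 0) = 1) with hAdef
    refine ⟨A, ?_⟩
    intro z b
    by_contra hfalse
    have h := hA z b (fun j => A (b j))
    rw [hBhat] at h
    have hBf : B z b (fun j => A (b j)) = false := by
      simpa using hfalse
    rw [hBf] at h
    rw [if_neg (by exact Bool.false_ne_true), sub_zero, one_mul] at h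
    have := Finset.prod_eq_zero_iff.mp h
    obtain ⟨j, _, hj⟩ := this
    by_cases hc : Ahat (fun i => if b j i then (1:F) else 0) = 1
    · have : A (b j) = true := by simp [hAdef, hc]
      rw [this] at hj
      simp [hc] at hj
    · have : A (b j) = false := by simp [hAdef, hc]
      rw [this] at hj
      simp at hj
      exact hc (by linear_combination hj)
end

section
/- Let F be a finite field, H ⊆ F, m ∈ ℕ, d ≥ |H|, and let F̂ : F^m → F be a polynomial of total degree at most d with ∑_{b⃗ ∈ H^m} F̂(b⃗) ≠ γ. For i ∈ [m-1], let ĝᵢ be polynomials with deg ĝᵢ ≤ d in each variable (i variables each). Then the probability over uniform c⃗ = (c₁,…,c_{m-1}) ∈ F^{m-1} that ALL of the following hold is at most (m-1)·d/|F|: (1) ∑_{b∈H} ĝ₁(b) = γ; (2) for all i ∈ [m-2], ∑_{b∈H} ĝ_{i+1}(c₁,…,cᵢ,b) = ĝᵢ(c₁,…,cᵢ); (3) ∑_{b∈H} F̂(c⃗,b) = ĝ_{m-1}(c⃗). [Soundness of the sumcheck protocol.] -/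
open Finset MvPolynomial
set_option maxHeartbeats 1000000
open Finset MvPolynomial

section helpers
variable {ι : Type*} [Fintype ι] [DecidableEq ι] {α : Type*} [DecidableEq α]
  {M : Type*} [AddCommMonoid M]

lemma piFinset_eq_biUnion (s : ι → Finset α) (k : ι) :
    Fintype.piFinset s = (s k).biUnion
      (fun x => Fintype.piFinset (Function.update s k {x})) := by
  ext v
  simp only [Fintype.mem_piFinset, Finset.mem_biUnion]
  constructor
  · intro h
    refine ⟨v k, h k, fun j => ?_⟩
    by_cases hj : j = k
    · subst hj; simp [Function.update]
    · simpa [Function.update, hj] using h j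
  · rintro ⟨x, hx, h⟩ j
    by_cases hj : j = k
    · subst hj
      have := h j; simp [Function.update] at this; simp [this, hx]
    · have := h j; simpa [Function.update, hj] using this

lemma sum_piFinset_split (s : ι → Finset α) (k : ι) (f : (ι → α) → M) :
    ∑ v ∈ Fintype.piFinset s, f v
      = ∑ x ∈ s k, ∑ v ∈ Fintype.piFinset (Function.update s k {x}), f v := by
  rw [piFinset_eq_biUnion s k, Finset.sum_biUnion]
  intro x hx y hy hxy
  simp only [Function.onFun]
  refine Finset.disjoint_left.2 fun v hv hv' => hxy ?_
  have h1 := (Fintype.mem_piFinset.1 hv) k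
  have h2 := (Fintype.mem_piFinset.1 hv') k
  simp [Function.update] at h1 h2
  rw [← h1, ← h2]

lemma sum_piFinset_update (s : ι → Finset α) (k : ι) (a b : α) (f : (ι → α) → M) :
    ∑ v ∈ Fintype.piFinset (Function.update s k {a}), f v
      = ∑ v ∈ Fintype.piFinset (Function.update s k {b}), f (Function.update v k a) := by
  refine Finset.sum_nbij' (fun v => Function.update v k b) (fun v => Function.update v k a)
    ?_ ?_ ?_ ?_ ?_
  · intro v hv
    rw [Fintype.mem_piFinset]
    intro j
    by_cases hj : j = k
    · subst hj; simp [Function.update]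
    · have := (Fintype.mem_piFinset.1 hv) j; simp [Function.update, hj] at this ⊢; exact this
  · intro v hv
    rw [Fintype.mem_piFinset]
    intro j
    by_cases hj : j = k
    · subst hj; simp [Function.update]
    · have := (Fintype.mem_piFinset.1 hv) j; simp [Function.update, hj] at this ⊢; exact this
  · intro v hv
    
    have h1 := (Fintype.mem_piFinset.1 hv) k
    simp [Function.update] at h1
    funext j
    by_cases hj : j = k
    · subst hj; simp [Function.update, h1]
    · simp [Function.update, hj]
  · intro v hv
    have h1 := (Fintype.mem_piFinset.1 hv) k
    simp [Function.update] at h1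
    funext j
    by_cases hj : j = k
    · subst hj; simp [Function.update, h1]
    · simp [Function.update, hj]
  · intro v hv
    have h1 := (Fintype.mem_piFinset.1 hv) k
    simp [Function.update] at h1
    congr 1
    funext j
    by_cases hj : j = k
    · subst hj; simp [Function.update, h1]
    · simp [Function.update, hj]

lemma sum_piFinset_factor (s : ι → Finset α) (k : ι) (z : α) (f : (ι → α) → M) :
    ∑ v ∈ Fintype.piFinset s, f v
      = ∑ w ∈ Fintype.piFinset (Function.update s k {z}),
          ∑ x ∈ s k, f (Function.update w k x) := by
  rw [sum_piFinset_split s k f, Finset.sum_comm]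
  refine Finset.sum_congr rfl fun x hx => ?_
  exact sum_piFinset_update s k x z f

end helpers


lemma eval_aeval {F : Type*} [CommRing F] {σ : Type*} (f : σ → Polynomial F)
    (p : MvPolynomial σ F) (x : F) :
    Polynomial.eval x (MvPolynomial.aeval f p)
      = MvPolynomial.eval (fun j => Polynomial.eval x (f j)) p := by
  rw [MvPolynomial.aeval_def, ← Polynomial.coe_evalRingHom,
    MvPolynomial.eval₂_comp_left]
  congr 1
  ext r
  simp

lemma natDegree_aeval_le {F : Type*} [CommRing F] [Nontrivial F] {σ : Type*} [DecidableEq σ] (k : σ)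
    (f : σ → Polynomial F) (p : MvPolynomial σ F)
    (hf : ∀ j, j ≠ k → (f j).natDegree = 0) (hk : f k = Polynomial.X) :
    (MvPolynomial.aeval f p).natDegree ≤ p.degreeOf k := by
  conv_lhs => rw [p.as_sum]
  rw [map_sum]
  refine Polynomial.natDegree_sum_le_of_forall_le _ _ fun m hm => ?_
  rw [MvPolynomial.aeval_monomial]
  refine le_trans (Polynomial.natDegree_mul_le) ?_
  have h1 : (algebraMap F (Polynomial F) (MvPolynomial.coeff m p)).natDegree = 0 := by
    simp [Polynomial.natDegree_C]
  rw [h1, zero_add]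
  have h2 : (m.prod fun i e => f i ^ e).natDegree ≤ m k := by
    rw [Finsupp.prod]
    refine le_trans (Polynomial.natDegree_prod_le _ _) ?_
    by_cases hkm : k ∈ m.support
    · rw [← Finset.sum_erase_add _ _ hkm]
      have : ∀ j ∈ m.support.erase k, (f j ^ m j).natDegree = 0 := by
        intro j hj
        have hjk := Finset.ne_of_mem_erase hj
        refine Nat.eq_zero_of_le_zero (le_trans Polynomial.natDegree_pow_le ?_)
        rw [hf j hjk]; simp
      rw [Finset.sum_eq_zero this, zero_add]
      refine le_trans Polynomial.natDegree_pow_le ?_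
      rw [hk, Polynomial.natDegree_X, mul_one]
    · have : ∀ j ∈ m.support, (f j ^ m j).natDegree = 0 := by
        intro j hj
        refine Nat.eq_zero_of_le_zero (le_trans Polynomial.natDegree_pow_le ?_)
        by_cases hjk : j = k
        · subst hjk; exact absurd hj hkm
        · rw [hf j hjk]; simp
      rw [Finset.sum_eq_zero this]
      exact Nat.zero_le _
  refine le_trans h2 ?_
  rw [MvPolynomial.degreeOf_eq_sup]
  exact Finset.le_sup (f := fun m => m k) hm


section defs
variable {F : Type*} [Field F] [Fintype F] [DecidableEq F]

/-- extend `c` by zero to `Fin (t+1)`. -/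
noncomputable def chat {t : ℕ} (c : Fin t → F) : Fin (t + 1) → F :=
  fun j => if h : (j : ℕ) < t then c ⟨j, h⟩ else 0

/-- univariate restriction of `ghat i` at prefix `c`. -/
noncomputable def pP {t : ℕ} (ghat : (i : Fin t) → MvPolynomial (Fin ((i : ℕ) + 1)) F)
    (i : Fin t) (c : Fin t → F) : Polynomial F :=
  MvPolynomial.aeval
    (fun j : Fin ((i : ℕ) + 1) =>
      if h : (j : ℕ) < (i : ℕ) then Polynomial.C (c ⟨(j : ℕ), h.trans i.isLt⟩)
      else Polynomial.X) (ghat i)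

noncomputable def Efam (H : Finset F) {t : ℕ} (i : Fin t) (c : Fin t → F) :
    Fin (t + 1) → Finset F :=
  fun j => if (j : ℕ) ≤ (i : ℕ) then {chat c j} else H

/-- univariate honest sumcheck polynomial at round `i` with prefix `c`. -/
noncomputable def qP (H : Finset F) {t : ℕ} (Fhat : MvPolynomial (Fin (t + 1)) F)
    (i : Fin t) (c : Fin t → F) : Polynomial F :=
  ∑ v ∈ Fintype.piFinset (Efam H i c),
    MvPolynomial.aeval
      (fun j : Fin (t + 1) =>
        if j = i.castSucc then Polynomial.X else Polynomial.C (v j)) Fhat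

variable {t : ℕ} (H : Finset F) (Fhat : MvPolynomial (Fin (t + 1)) F)
  (ghat : (i : Fin t) → MvPolynomial (Fin ((i : ℕ) + 1)) F)

lemma pP_natDegree_le (d : ℕ) (hg : ∀ (i : Fin t) (j : Fin ((i : ℕ) + 1)),
    (ghat i).degreeOf j ≤ d) (i : Fin t) (c : Fin t → F) :
    (pP ghat i c).natDegree ≤ d := by
  refine le_trans (natDegree_aeval_le (Fin.last (i : ℕ)) _ _ ?_ ?_) (hg i (Fin.last _))
  · intro j hj
    have hne : (j : ℕ) ≠ (i : ℕ) := fun h => hj (Fin.ext (by simpa using h))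
    have hlt : (j : ℕ) < (i : ℕ) := by have := j.isLt; omega
    simp only [dif_pos hlt, Polynomial.natDegree_C]
  · simp

lemma qP_natDegree_le (d : ℕ) (hF : Fhat.totalDegree ≤ d) (i : Fin t) (c : Fin t → F) :
    (qP H Fhat i c).natDegree ≤ d := by
  refine Polynomial.natDegree_sum_le_of_forall_le _ _ fun v hv => ?_
  refine le_trans (natDegree_aeval_le i.castSucc _ _ ?_ ?_)
    (le_trans (Fhat.degreeOf_le_totalDegree _) hF)
  · intro j hj; simp only [if_neg hj, Polynomial.natDegree_C]
  · simp

lemma pP_eval (i : Fin t) (c : Fin t → F) (x : F) :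
    Polynomial.eval x (pP ghat i c)
      = MvPolynomial.eval
          (fun j : Fin ((i : ℕ) + 1) =>
            if h : (j : ℕ) < (i : ℕ) then c ⟨(j : ℕ), h.trans i.isLt⟩ else x)
          (ghat i) := by
  rw [pP, eval_aeval]
  have hfun : (fun j : Fin ((i : ℕ) + 1) => Polynomial.eval x
      (if h : (j : ℕ) < (i : ℕ) then Polynomial.C (c ⟨(j : ℕ), h.trans i.isLt⟩)
        else Polynomial.X))
      = fun j : Fin ((i : ℕ) + 1) =>
          if h : (j : ℕ) < (i : ℕ) then c ⟨(j : ℕ), h.trans i.isLt⟩ else x := by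
    funext j
    by_cases h : (j : ℕ) < (i : ℕ) <;> simp [h]
  rw [hfun]

lemma qP_eval (i : Fin t) (c : Fin t → F) (x : F) :
    Polynomial.eval x (qP H Fhat i c)
      = ∑ v ∈ Fintype.piFinset (Efam H i c),
          MvPolynomial.eval (Function.update v i.castSucc x) Fhat := by
  rw [qP, Polynomial.eval_finset_sum]
  refine Finset.sum_congr rfl fun v hv => ?_
  rw [eval_aeval]
  have hfun : (fun j : Fin (t + 1) => Polynomial.eval x
      (if j = i.castSucc then Polynomial.X else Polynomial.C (v j)))
      = Function.update v i.castSucc x := by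
    funext j
    by_cases hj : j = i.castSucc
    · subst hj; simp [Function.update]
    · simp [hj, Function.update]
  rw [hfun]

lemma snoc_apply {β : Type*} {n : ℕ} (c : Fin n → β) (b : β) (j : Fin (n + 1)) :
    (Fin.snoc c b : Fin (n + 1) → β) j = if h : (j : ℕ) < n then c ⟨(j : ℕ), h⟩ else b := by
  induction j using Fin.lastCases with
  | last => simp
  | cast j' => simp [Fin.snoc_castSucc]

lemma chat_castSucc {t : ℕ} (c : Fin t → F) (i : Fin t) :
    chat c i.castSucc = c i := by
  simp [chat, i.isLt]

lemma qP_eval_self (i : Fin t) (c : Fin t → F) :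
    Polynomial.eval (c i) (qP H Fhat i c)
      = ∑ v ∈ Fintype.piFinset (Efam H i c), MvPolynomial.eval v Fhat := by
  rw [qP_eval]
  refine Finset.sum_congr rfl fun v hv => ?_
  have hv' := (Fintype.mem_piFinset.1 hv) i.castSucc
  simp only [Efam, Fin.coe_castSucc, le_refl, if_pos, Finset.mem_singleton] at hv'
  rw [show c i = v i.castSucc by rw [hv', chat_castSucc], Function.update_eq_self]

lemma Efam_zero (ht : 0 < t) (c : Fin t → F) :
    Function.update (fun _ : Fin (t + 1) => H) ((⟨0, ht⟩ : Fin t).castSucc)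
        {chat c ((⟨0, ht⟩ : Fin t).castSucc)} = Efam H ⟨0, ht⟩ c := by
  funext j
  by_cases hj : j = (⟨0, ht⟩ : Fin t).castSucc
  · subst hj; simp [Efam, Function.update]
  · have hj' : (j : ℕ) ≠ 0 := fun h => hj (Fin.ext (by simpa using h))
    rw [Function.update_of_ne hj]
    simp [Efam, hj']

lemma qP_zero_sum (ht : 0 < t) (c : Fin t → F) :
    ∑ x ∈ H, Polynomial.eval x (qP H Fhat ⟨0, ht⟩ c)
      = ∑ b ∈ Fintype.piFinset (fun _ : Fin (t + 1) => H), MvPolynomial.eval b Fhat := by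
  rw [sum_piFinset_split (fun _ : Fin (t + 1) => H) ((⟨0, ht⟩ : Fin t).castSucc)
    (fun v => MvPolynomial.eval v Fhat)]
  refine Finset.sum_congr rfl fun x hx => ?_
  rw [qP_eval, sum_piFinset_update (fun _ : Fin (t + 1) => H)
    ((⟨0, ht⟩ : Fin t).castSucc) x (chat c ((⟨0, ht⟩ : Fin t).castSucc))
    (fun v => MvPolynomial.eval v Fhat), Efam_zero H ht c]

lemma Efam_succ (i : Fin t) (hi : (i : ℕ) + 1 < t) (c : Fin t → F) :
    Function.update (Efam H i c) ((⟨(i : ℕ) + 1, hi⟩ : Fin t).castSucc)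
        {chat c ((⟨(i : ℕ) + 1, hi⟩ : Fin t).castSucc)} = Efam H ⟨(i : ℕ) + 1, hi⟩ c := by
  funext j
  by_cases hj : j = (⟨(i : ℕ) + 1, hi⟩ : Fin t).castSucc
  · subst hj; simp [Efam, Function.update]
  · have hj' : (j : ℕ) ≠ (i : ℕ) + 1 := fun h => hj (Fin.ext (by simpa using h))
    have h2 : ((j : ℕ) ≤ (i : ℕ)) ↔ ((j : ℕ) ≤ (i : ℕ) + 1) := by omega
    rw [Function.update_of_ne hj]
    simp only [Efam]
    rw [if_congr h2 rfl rfl]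

lemma qP_step (i : Fin t) (hi : (i : ℕ) + 1 < t) (c : Fin t → F) :
    ∑ x ∈ H, Polynomial.eval x (qP H Fhat ⟨(i : ℕ) + 1, hi⟩ c)
      = Polynomial.eval (c i) (qP H Fhat i c) := by
  rw [qP_eval_self]
  set k := (⟨(i : ℕ) + 1, hi⟩ : Fin t).castSucc with hk
  have hsk : Efam H i c k = H := by
    simp [Efam, hk]
  rw [sum_piFinset_split (Efam H i c) k (fun v => MvPolynomial.eval v Fhat), hsk]
  refine Finset.sum_congr rfl fun x hx => ?_
  rw [qP_eval, sum_piFinset_update (Efam H i c) k x (chat c k)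
    (fun v => MvPolynomial.eval v Fhat), Efam_succ H i hi c]

lemma qP_last (ht : 0 < t) (c : Fin t → F) :
    Polynomial.eval (c ⟨t - 1, by omega⟩) (qP H Fhat ⟨t - 1, by omega⟩ c)
      = ∑ b ∈ H, MvPolynomial.eval (Fin.snoc c b) Fhat := by
  rw [qP_eval_self]
  have hmem : ∀ v ∈ Fintype.piFinset (Efam H ⟨t - 1, by omega⟩ c),
      ∀ j : Fin (t + 1), ((j : ℕ) < t → v j = chat c j) ∧ ((j : ℕ) = t → v j ∈ H) := by
    intro v hv j
    have := (Fintype.mem_piFinset.1 hv) j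
    constructor
    · intro hj
      have hle : (j : ℕ) ≤ t - 1 := by omega
      simpa [Efam, hle] using this
    · intro hj
      have hle : ¬ ((j : ℕ) ≤ t - 1) := by omega
      simpa [Efam, hle] using this
  have hsnocv : ∀ v ∈ Fintype.piFinset (Efam H (⟨t - 1, by omega⟩ : Fin t) c),
      (Fin.snoc c (v (Fin.last t)) : Fin (t + 1) → F) = v := by
    intro v hv
    funext j
    rw [snoc_apply]
    by_cases hj : (j : ℕ) < t
    · rw [dif_pos hj, (hmem v hv j).1 hj]
      simp [chat, hj]
    · rw [dif_neg hj]
      congr 1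
      exact Fin.ext (by have := j.isLt; simp [Fin.last]; omega)
  refine Finset.sum_nbij' (fun v => v (Fin.last t)) (fun b => Fin.snoc c b) ?_ ?_ ?_ ?_ ?_
  · intro v hv
    exact ((hmem v hv (Fin.last t)).2 (by simp))
  · intro b hb
    rw [Fintype.mem_piFinset]
    intro j
    show (Fin.snoc c b : Fin (t + 1) → F) j ∈ Efam H ⟨t - 1, by omega⟩ c j
    rw [snoc_apply]
    by_cases hj : (j : ℕ) < t
    · have hle : (j : ℕ) ≤ t - 1 := by omega
      simp [Efam, hle, hj, chat]
    · have hle : ¬ ((j : ℕ) ≤ t - 1) := by omega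
      simp [Efam, hle, hj, hb]
  · intro v hv
    exact hsnocv v hv
  · intro b hb
    simp
  · intro v hv
    show MvPolynomial.eval v Fhat = MvPolynomial.eval (Fin.snoc c (v (Fin.last t))) Fhat
    rw [hsnocv v hv]

lemma pP_eval_self (i : Fin t) (c : Fin t → F) :
    Polynomial.eval (c i) (pP ghat i c)
      = MvPolynomial.eval
          (fun j : Fin ((i : ℕ) + 1) => c (Fin.castLE i.isLt j)) (ghat i) := by
  rw [pP_eval]
  have hfun : (fun j : Fin ((i : ℕ) + 1) =>
        if h : (j : ℕ) < (i : ℕ) then c ⟨(j : ℕ), h.trans i.isLt⟩ else c i)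
      = fun j : Fin ((i : ℕ) + 1) => c (Fin.castLE i.isLt j) := by
    funext j
    by_cases h : (j : ℕ) < (i : ℕ)
    · rw [dif_pos h]
      exact congrArg c (Fin.ext rfl)
    · rw [dif_neg h]
      congr 1
      exact Fin.ext (by have := j.isLt; simp [Fin.castLE]; omega)
  rw [hfun]

lemma pP_sum_eval (i : Fin t) (hi : (i : ℕ) + 1 < t) (c : Fin t → F) (b : F) :
    Polynomial.eval b (pP ghat ⟨(i : ℕ) + 1, hi⟩ c)
      = MvPolynomial.eval
          (Fin.snoc (fun j : Fin ((i : ℕ) + 1) => c (Fin.castLE i.isLt j)) b)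
          (ghat ⟨(i : ℕ) + 1, hi⟩) := by
  rw [pP_eval]
  have hfun : (fun j : Fin ((i : ℕ) + 1 + 1) =>
        if h : (j : ℕ) < (i : ℕ) + 1 then
          c ⟨(j : ℕ), h.trans hi⟩ else b)
      = (Fin.snoc (fun j : Fin ((i : ℕ) + 1) => c (Fin.castLE i.isLt j)) b :
          Fin ((i : ℕ) + 1 + 1) → F) := by
    funext j
    rw [snoc_apply]
    by_cases h : (j : ℕ) < (i : ℕ) + 1
    · rw [dif_pos h, dif_pos h]
      exact congrArg c (Fin.ext rfl)
    · rw [dif_neg h, dif_neg h]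
  rw [hfun]

lemma pP_zero_eval (ht : 0 < t) (c : Fin t → F) (b : F) :
    Polynomial.eval b (pP ghat ⟨0, ht⟩ c)
      = MvPolynomial.eval (fun _ : Fin 1 => b) (ghat ⟨0, ht⟩) := by
  rw [pP_eval]
  have hfun : (fun j : Fin (0 + 1) =>
        if h : (j : ℕ) < 0 then c ⟨(j : ℕ), h.trans ht⟩ else b)
      = fun _ : Fin 1 => b := by
    funext j
    rw [dif_neg (Nat.not_lt_zero _)]
  rw [hfun]

lemma pP_update (i : Fin t) (w : Fin t → F) (x : F) :
    pP ghat i (Function.update w i x) = pP ghat i w := by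
  simp only [pP]
  have hfun : (fun j : Fin ((i : ℕ) + 1) =>
        if h : (j : ℕ) < (i : ℕ) then
          Polynomial.C (Function.update w i x ⟨(j : ℕ), h.trans i.isLt⟩)
        else Polynomial.X)
      = fun j : Fin ((i : ℕ) + 1) =>
        if h : (j : ℕ) < (i : ℕ) then Polynomial.C (w ⟨(j : ℕ), h.trans i.isLt⟩)
        else Polynomial.X := by
    funext j
    by_cases h : (j : ℕ) < (i : ℕ)
    · rw [dif_pos h, dif_pos h]
      rw [Function.update_of_ne (fun he => by
          have hv : (j : ℕ) = (i : ℕ) := congrArg Fin.val he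
          omega) x w]
    · rw [dif_neg h, dif_neg h]
  rw [hfun]

lemma chat_update_ne (w : Fin t → F) (i : Fin t) (x : F) (j : Fin (t + 1))
    (hj : (j : ℕ) ≠ (i : ℕ)) :
    chat (Function.update w i x) j = chat w j := by
  simp only [chat]
  by_cases h : (j : ℕ) < t
  · rw [dif_pos h, dif_pos h]
    exact Function.update_of_ne
      (fun he : (⟨(j : ℕ), h⟩ : Fin t) = i => hj (congrArg Fin.val he)) x w
  · rw [dif_neg h, dif_neg h]

lemma qP_update (i : Fin t) (w : Fin t → F) (x : F) :
    qP H Fhat i (Function.update w i x) = qP H Fhat i w := by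
  have hE : Efam H i (Function.update w i x)
      = Function.update (Efam H i w) i.castSucc {x} := by
    funext j
    by_cases hj : j = i.castSucc
    · subst hj
      have : chat (Function.update w i x) i.castSucc = x := by
        rw [chat_castSucc, Function.update_self]
      simp [Efam, this]
    · rw [Function.update_of_ne hj]
      have hj' : (j : ℕ) ≠ (i : ℕ) := fun h => hj (Fin.ext (by simpa using h))
      simp only [Efam, chat_update_ne w i x j hj']
  rw [qP, qP, hE]
  have hself : Efam H i w = Function.update (Efam H i w) i.castSucc {chat w i.castSucc} := by
    have : Efam H i w i.castSucc = {chat w i.castSucc} := by simp [Efam]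
    rw [← this, Function.update_eq_self]
  conv_rhs => rw [hself]
  rw [sum_piFinset_update (Efam H i w) i.castSucc x (chat w i.castSucc)]
  refine Finset.sum_congr rfl fun v hv => ?_
  have hfun : (fun j : Fin (t + 1) =>
        if j = i.castSucc then Polynomial.X
        else Polynomial.C (Function.update v i.castSucc x j))
      = fun j : Fin (t + 1) =>
        if j = i.castSucc then Polynomial.X else Polynomial.C (v j) := by
    funext j
    by_cases hj : j = i.castSucc
    · rw [if_pos hj, if_pos hj]
    · rw [if_neg hj, if_neg hj, Function.update_of_ne hj]
  rw [hfun]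

lemma card_root_le (r : Polynomial F) (d : ℕ) (hr : r.natDegree ≤ d) :
    (Finset.univ.filter fun x : F => r ≠ 0 ∧ Polynomial.eval x r = 0).card ≤ d := by
  by_cases h : r = 0
  · simp [h]
  · refine le_trans (Finset.card_le_card ?_)
      (le_trans (Multiset.toFinset_card_le _) (le_trans (Polynomial.card_roots' r) hr))
    intro x hx
    rw [Finset.mem_filter] at hx
    rw [Multiset.mem_toFinset, Polynomial.mem_roots']
    exact ⟨h, hx.2.2⟩

lemma card_bad_le (d : ℕ) (hF : Fhat.totalDegree ≤ d)
    (hg : ∀ (i : Fin t) (j : Fin ((i : ℕ) + 1)), (ghat i).degreeOf j ≤ d) (i : Fin t)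
    {inst : DecidablePred fun c : Fin t → F =>
      pP ghat i c - qP H Fhat i c ≠ 0 ∧
        Polynomial.eval (c i) (pP ghat i c - qP H Fhat i c) = 0} :
    (Finset.univ.filter fun c : Fin t → F =>
        pP ghat i c - qP H Fhat i c ≠ 0 ∧
          Polynomial.eval (c i) (pP ghat i c - qP H Fhat i c) = 0).card
      ≤ Fintype.card F ^ (t - 1) * d := by
  classical
  rw [Finset.card_filter, ← Fintype.piFinset_univ,
    sum_piFinset_factor (fun _ : Fin t => (Finset.univ : Finset F)) i 0]
  have hinner : ∀ w : Fin t → F,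
      (∑ x ∈ (Finset.univ : Finset F),
        if (pP ghat i (Function.update w i x) - qP H Fhat i (Function.update w i x) ≠ 0 ∧
            Polynomial.eval (Function.update w i x i)
              (pP ghat i (Function.update w i x) - qP H Fhat i (Function.update w i x)) = 0)
        then 1 else 0) ≤ d := by
    intro w
    have hr : ∀ x : F,
        (pP ghat i (Function.update w i x) - qP H Fhat i (Function.update w i x) ≠ 0 ∧
          Polynomial.eval (Function.update w i x i)
            (pP ghat i (Function.update w i x) - qP H Fhat i (Function.update w i x)) = 0)
        ↔ (pP ghat i w - qP H Fhat i w ≠ 0 ∧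
            Polynomial.eval x (pP ghat i w - qP H Fhat i w) = 0) := by
      intro x
      rw [pP_update, qP_update, Function.update_self]
    calc (∑ x ∈ (Finset.univ : Finset F),
          if (pP ghat i (Function.update w i x) - qP H Fhat i (Function.update w i x) ≠ 0 ∧
              Polynomial.eval (Function.update w i x i)
                (pP ghat i (Function.update w i x) - qP H Fhat i (Function.update w i x)) = 0)
          then 1 else 0)
        = ∑ x ∈ (Finset.univ : Finset F),
            if (pP ghat i w - qP H Fhat i w ≠ 0 ∧
                Polynomial.eval x (pP ghat i w - qP H Fhat i w) = 0) then 1 else 0 :=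
          Finset.sum_congr rfl fun x _ => if_congr (hr x) rfl rfl
      _ = (Finset.univ.filter fun x : F => pP ghat i w - qP H Fhat i w ≠ 0 ∧
            Polynomial.eval x (pP ghat i w - qP H Fhat i w) = 0).card :=
          (Finset.card_filter _ _).symm
      _ ≤ d := card_root_le _ d (le_trans (Polynomial.natDegree_sub_le _ _)
          (max_le (pP_natDegree_le ghat d hg i w) (qP_natDegree_le H Fhat d hF i w)))
  refine le_trans (Finset.sum_le_sum fun w _ => hinner w) ?_
  rw [Finset.sum_const, smul_eq_mul, Fintype.card_piFinset]
  have hprod : (∏ j : Fin t,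
      ((Function.update (fun _ : Fin t => (Finset.univ : Finset F)) i {0}) j).card)
      = Fintype.card F ^ (t - 1) := by
    have h1 : (∏ j : Fin t,
        ((Function.update (fun _ : Fin t => (Finset.univ : Finset F)) i {0}) j).card)
        = ∏ j : Fin t, (Function.update (fun _ : Fin t => Fintype.card F) i 1 j) := by
      refine Finset.prod_congr rfl fun j _ => ?_
      by_cases hj : j = i
      · subst hj; simp [Function.update]
      · rw [Function.update_of_ne hj, Function.update_of_ne hj]
        simp
    rw [h1, Finset.prod_update_of_mem (Finset.mem_univ i)]
    have hc : ((Finset.univ : Finset (Fin t)) \ {i}).card = t - 1 := by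
      rw [Finset.card_sdiff_of_subset (by simp)]
      simp
    rw [Finset.prod_const, hc]
    simp
  rw [hprod]

end defs

/-- soundness of the sumcheck protocol: if the claimed sum `γ` is
wrong, then for a random `c⃗ ∈ F^{m-1}` the probability that all sumcheck
consistency checks pass is at most `(m-1)·d/|F|`.  Here `m = t+1` and `ĝ i`
(for `i : Fin t`) is a polynomial in `i+1` variables of individual degree ≤ `d`. -/
theorem stmt14 (F : Type*) [Field F] [Fintype F] [DecidableEq F]
    (H : Finset F) (t : ℕ) (ht : 0 < t) (d : ℕ) (γ : F)
    (Fhat : MvPolynomial (Fin (t + 1)) F)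
    (hFdeg : Fhat.totalDegree ≤ d)
    (hsum : ∑ b ∈ Fintype.piFinset (fun _ : Fin (t + 1) => H),
      eval b Fhat ≠ γ)
    (ghat : (i : Fin t) → MvPolynomial (Fin ((i : ℕ) + 1)) F)
    (hgdeg : ∀ (i : Fin t) (j : Fin ((i : ℕ) + 1)), (ghat i).degreeOf j ≤ d) :
    ((Finset.univ.filter fun c : Fin t → F =>
        (∑ b ∈ H, eval (fun _ : Fin 1 => b) (ghat ⟨0, ht⟩) = γ) ∧
        (∀ (i : Fin t) (hi : (i : ℕ) + 1 < t),
          ∑ b ∈ H,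
              eval (Fin.snoc (fun j : Fin ((i : ℕ) + 1) => c (Fin.castLE i.isLt j)) b)
                (ghat ⟨(i : ℕ) + 1, hi⟩) =
            eval (fun j : Fin ((i : ℕ) + 1) => c (Fin.castLE i.isLt j)) (ghat i)) ∧
        (∑ b ∈ H, eval (Fin.snoc c b) Fhat =
          eval (fun j : Fin (((⟨t - 1, by omega⟩ : Fin t) : ℕ) + 1) =>
              c (Fin.castLE (⟨t - 1, by omega⟩ : Fin t).isLt j))
            (ghat ⟨t - 1, by omega⟩))).card : ℝ) /
        (Fintype.card F : ℝ) ^ t ≤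
      (t : ℝ) * d / (Fintype.card F : ℝ) := by
  classical
  set E := (Finset.univ.filter fun c : Fin t → F =>
        (∑ b ∈ H, eval (fun _ : Fin 1 => b) (ghat ⟨0, ht⟩) = γ) ∧
        (∀ (i : Fin t) (hi : (i : ℕ) + 1 < t),
          ∑ b ∈ H,
              eval (Fin.snoc (fun j : Fin ((i : ℕ) + 1) => c (Fin.castLE i.isLt j)) b)
                (ghat ⟨(i : ℕ) + 1, hi⟩) =
            eval (fun j : Fin ((i : ℕ) + 1) => c (Fin.castLE i.isLt j)) (ghat i)) ∧
        (∑ b ∈ H, eval (Fin.snoc c b) Fhat =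
          eval (fun j : Fin (((⟨t - 1, by omega⟩ : Fin t) : ℕ) + 1) =>
              c (Fin.castLE (⟨t - 1, by omega⟩ : Fin t).isLt j))
            (ghat ⟨t - 1, by omega⟩))) with hE
  have hsub : E ⊆ Finset.univ.biUnion (fun i : Fin t =>
      Finset.univ.filter fun c : Fin t → F =>
        pP ghat i c - qP H Fhat i c ≠ 0 ∧
          Polynomial.eval (c i) (pP ghat i c - qP H Fhat i c) = 0) := by
    intro c hc
    rw [hE, Finset.mem_filter] at hc
    obtain ⟨-, h1, h2, h3⟩ := hc
    rw [Finset.mem_biUnion]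
    by_contra hB
    push_neg at hB
    have hB' : ∀ i : Fin t, ¬ (pP ghat i c - qP H Fhat i c ≠ 0 ∧
        Polynomial.eval (c i) (pP ghat i c - qP H Fhat i c) = 0) := by
      intro i hx
      exact absurd ((Finset.mem_filter).2 ⟨Finset.mem_univ c, hx⟩) (hB i (Finset.mem_univ i))
    have step : ∀ i : Fin t, pP ghat i c ≠ qP H Fhat i c →
        Polynomial.eval (c i) (pP ghat i c) ≠ Polynomial.eval (c i) (qP H Fhat i c) := by
      intro i hpq heq
      exact hB' i ⟨sub_ne_zero.2 hpq, by rw [Polynomial.eval_sub, heq, sub_self]⟩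
    have polyne : ∀ i : Fin t,
        (∑ b ∈ H, Polynomial.eval b (pP ghat i c)) ≠
          (∑ b ∈ H, Polynomial.eval b (qP H Fhat i c)) →
        pP ghat i c ≠ qP H Fhat i c := fun i hs he => hs (by rw [he])
    have key : ∀ n, ∀ hn : n < t,
        Polynomial.eval (c ⟨n, hn⟩) (pP ghat ⟨n, hn⟩ c) ≠
          Polynomial.eval (c ⟨n, hn⟩) (qP H Fhat ⟨n, hn⟩ c) := by
      intro n
      induction n with
      | zero =>
        intro hn
        refine step ⟨0, hn⟩ (polyne ⟨0, hn⟩ ?_)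
        intro hs
        apply hsum
        calc ∑ b ∈ Fintype.piFinset (fun _ : Fin (t + 1) => H), eval b Fhat
            = ∑ x ∈ H, Polynomial.eval x (qP H Fhat ⟨0, hn⟩ c) :=
              (qP_zero_sum H Fhat hn c).symm
          _ = ∑ b ∈ H, Polynomial.eval b (pP ghat ⟨0, hn⟩ c) := hs.symm
          _ = ∑ b ∈ H, eval (fun _ : Fin 1 => b) (ghat ⟨0, hn⟩) :=
              Finset.sum_congr rfl fun b _ => pP_zero_eval ghat hn c b
          _ = γ := h1
      | succ m ih =>
        intro hn
        have hm : m < t := Nat.lt_of_succ_lt hn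
        refine step ⟨m + 1, hn⟩ (polyne ⟨m + 1, hn⟩ ?_)
        intro hs
        apply ih hm
        calc Polynomial.eval (c ⟨m, hm⟩) (pP ghat ⟨m, hm⟩ c)
            = eval (fun j : Fin (m + 1) => c (Fin.castLE (⟨m, hm⟩ : Fin t).isLt j))
                (ghat ⟨m, hm⟩) := pP_eval_self ghat ⟨m, hm⟩ c
          _ = ∑ b ∈ H, eval
                (Fin.snoc (fun j : Fin (m + 1) => c (Fin.castLE (⟨m, hm⟩ : Fin t).isLt j)) b)
                (ghat ⟨m + 1, hn⟩) := (h2 ⟨m, hm⟩ hn).symm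
          _ = ∑ b ∈ H, Polynomial.eval b (pP ghat ⟨m + 1, hn⟩ c) :=
              Finset.sum_congr rfl fun b _ => (pP_sum_eval ghat ⟨m, hm⟩ hn c b).symm
          _ = ∑ b ∈ H, Polynomial.eval b (qP H Fhat ⟨m + 1, hn⟩ c) := hs
          _ = Polynomial.eval (c ⟨m, hm⟩) (qP H Fhat ⟨m, hm⟩ c) :=
              qP_step H Fhat ⟨m, hm⟩ hn c
    refine key (t - 1) (by omega) ?_
    calc Polynomial.eval (c ⟨t - 1, by omega⟩) (pP ghat ⟨t - 1, by omega⟩ c)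
        = eval (fun j : Fin ((t - 1) + 1) =>
            c (Fin.castLE (⟨t - 1, by omega⟩ : Fin t).isLt j)) (ghat ⟨t - 1, by omega⟩) :=
          pP_eval_self ghat ⟨t - 1, by omega⟩ c
      _ = ∑ b ∈ H, eval (Fin.snoc c b) Fhat := h3.symm
      _ = Polynomial.eval (c ⟨t - 1, by omega⟩) (qP H Fhat ⟨t - 1, by omega⟩ c) :=
          (qP_last H Fhat ht c).symm
  have hcard : E.card ≤ t * (Fintype.card F ^ (t - 1) * d) := by
    refine le_trans (Finset.card_le_card hsub) (le_trans Finset.card_biUnion_le ?_)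
    refine le_trans (Finset.sum_le_sum fun i _ =>
      card_bad_le H Fhat ghat d hFdeg hgdeg i) ?_
    rw [Finset.sum_const, smul_eq_mul, Finset.card_univ, Fintype.card_fin]
  have hQ : (0 : ℝ) < (Fintype.card F : ℝ) := by exact_mod_cast Fintype.card_pos
  have hQt : (0 : ℝ) < (Fintype.card F : ℝ) ^ t := by positivity
  rw [div_le_div_iff₀ hQt hQ]
  have h1 : ((E.card : ℝ)) ≤ (t : ℝ) * ((Fintype.card F : ℝ) ^ (t - 1) * d) := by
    exact_mod_cast hcard
  have hpow : ((Fintype.card F : ℝ)) ^ t = (Fintype.card F : ℝ) ^ (t - 1) * (Fintype.card F : ℝ) := by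
    rw [← pow_succ]
    congr 1
    omega
  calc ((E.card : ℝ)) * (Fintype.card F : ℝ)
      ≤ ((t : ℝ) * ((Fintype.card F : ℝ) ^ (t - 1) * d)) * (Fintype.card F : ℝ) :=
        mul_le_mul_of_nonneg_right h1 hQ.le
    _ = (t : ℝ) * d * ((Fintype.card F : ℝ) ^ (t - 1) * (Fintype.card F : ℝ)) := by ring
    _ = (t : ℝ) * d * (Fintype.card F : ℝ) ^ t := by rw [hpow]
end
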